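/- arXiv:2005.01894 — 3 statements merged into one kernel-verified Lean document; each statement's English description precedes it below -/
import Mathlib

section
/- For polynomial functors p and q, the type of natural transformations from the associated functor of p to the associated functor of q is in bijection with Π (i : p.A), Σ (j : q.A), (q.B j → p.B i); that is, a morphism of polynomials is given by an on-positions function f : p.A → q.A together with, for each i : p.A, an on-directions function f♯_i : q.B (f i) → p.B i. -/
/-!
`p.toFunctor` is the sum over `i : p.A` of the representables `X ↦ (p.B i → X)`. By Yoneda,
a natural transformation `p.toFunctor ⟶ q.toFunctor` is therefore determined by, and may
freely prescribe, the image of each generic element `⟨i, id⟩ : p.Obj (p.B i)`, and that image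
is an arbitrary element of `q.Obj (p.B i) = Σ j : q.A, (q.B j → p.B i)`.
-/

open CategoryTheory

universe u

def PFunctor.toFunctor (P : PFunctor.{u, u}) : Type u ⥤ Type u where
  obj X := P.Obj X
  map f := TypeCat.ofHom (fun x => P.map f x)
  map_id := by intro X; ext x; exact P.id_map x
  map_comp := by intro X Y Z f g; ext x; exact (P.map_map f g x).symm

namespace PFunctor

variable {p q : PFunctor.{u, u}}

def generic (p : PFunctor.{u, u}) (i : p.A) : p.Obj (p.B i) := ⟨i, id⟩

theorem app_eq_map_app_generic (α : p.toFunctor ⟶ q.toFunctor) {X : Type u} (i : p.A)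
    (v : p.B i → X) : α.app X ⟨i, v⟩ = q.map v (α.app (p.B i) (p.generic i)) :=
  ConcreteCategory.congr_hom (α.naturality (TypeCat.ofHom v)) (p.generic i)

def natTransOfLens (f : ∀ i : p.A, Σ j : q.A, (q.B j → p.B i)) :
    p.toFunctor ⟶ q.toFunctor where
  app X := TypeCat.ofHom fun x : p.Obj X => (⟨(f x.1).1, x.2 ∘ (f x.1).2⟩ : q.Obj X)
  naturality _ _ _ := rfl

def toFunctorHomEquiv (p q : PFunctor.{u, u}) :
    (p.toFunctor ⟶ q.toFunctor) ≃ (∀ i : p.A, Σ j : q.A, (q.B j → p.B i)) where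
  toFun α i := α.app (p.B i) (p.generic i)
  invFun := natTransOfLens
  left_inv α := by
    ext X ⟨i, v⟩
    exact (app_eq_map_app_generic α i v).symm
  right_inv _ := rfl

end PFunctor

/-- morphisms of polynomial functors are given by an on-positions function
together with on-directions functions. -/
theorem stmt_1 (p q : PFunctor.{u, u}) :
    Nonempty ((p.toFunctor ⟶ q.toFunctor) ≃ (∀ i : p.A, Σ j : q.A, (q.B j → p.B i))) :=
  ⟨p.toFunctorHomEquiv q⟩
end

section
/- The category of polynomial functors is cartesian closed: for polynomial functors p, q, r there is a bijection, natural in r, between natural transformations from the pointwise product of (the associated functors of) r and p to (the associated functor of) q, and natural transformations from r to the functor q^p defined by q^p(X) = Π (i : p.A), Σ (j : q.A), (q.B j → (p.B i ⊕ X)) (i.e. q^p is the product over i : p.A of the composites q ∘ (p.B i + y), which is again a polynomial functor). -/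
open CategoryTheory

universe u

/-- The pointwise product of two functors `Type u ⥤ Type u`. -/
def prodFun (F G : Type u ⥤ Type u) : Type u ⥤ Type u where
  obj X := F.obj X × G.obj X
  map f := TypeCat.ofHom (fun x => (F.map f x.1, G.map f x.2))
  map_id := by intro X; ext x <;> simp
  map_comp := by intro X Y Z f g; ext x <;> simp

/-- The internal hom for the cartesian closed structure:
`q^p (X) = Π (i : p.A), Σ (j : q.A), (q.B j → (p.B i ⊕ X))`. -/
def expFun (p q : PFunctor.{u, u}) : Type u ⥤ Type u where
  obj X := ∀ i : p.A, Σ j : q.A, (q.B j → (p.B i ⊕ X))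
  map f := TypeCat.ofHom (fun g i => ⟨(g i).1, fun d => Sum.map id f ((g i).2 d)⟩)
  map_id := by
    intro X; ext g : 2; funext g; funext i
    show (⟨(g i).1, fun d => Sum.map id id ((g i).2 d)⟩ : Σ j : q.A, (q.B j → p.B i ⊕ X)) = g i
    simp [Sum.map_id_id]
  map_comp := by
    intro X Y Z f h; ext g : 2; funext g; funext i
    show (⟨(g i).1, fun d => Sum.map id (f ≫ h) ((g i).2 d)⟩ : Σ j : q.A, (q.B j → p.B i ⊕ Z))
      = ⟨(g i).1, fun d => Sum.map id h (Sum.map id f ((g i).2 d))⟩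
    congr 1
    funext d
    cases (g i).2 d <;> rfl

/-- The natural transformation of associated functors induced by a morphism of polynomials
given by on-positions and on-directions data. -/
def lensNat {p q : PFunctor.{u, u}} (f : ∀ i : p.A, Σ j : q.A, (q.B j → p.B i)) :
    p.toFunctor ⟶ q.toFunctor where
  app X := TypeCat.ofHom (fun x => ⟨(f x.1).1, fun d => x.2 ((f x.1).2 d)⟩)
  naturality := by intros; rfl

/-- The induced morphism `r' × p ⟶ r × p` on pointwise products of associated functors. -/
def lensProdWhisker (p : PFunctor.{u, u}) {r r' : PFunctor.{u, u}}
    (f : ∀ i : r'.A, Σ j : r.A, (r.B j → r'.B i)) :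
    prodFun r'.toFunctor p.toFunctor ⟶ prodFun r.toFunctor p.toFunctor where
  app X := TypeCat.ofHom (fun x => (⟨(f x.1.1).1, fun d => x.1.2 ((f x.1.1).2 d)⟩, x.2))
  naturality := by intros; rfl

/-! A polynomial functor is a coproduct of representables, `r ≅ Σ a, y^(r.B a)`, and likewise
`r × p ≅ Σ a i, y^(p.B i ⊕ r.B a)`. By the Yoneda lemma a natural transformation out of either
is its family of values on the generic elements, so
`Nat(r × p, q) ≃ Π a i, q (p.B i ⊕ r.B a) = Π a, q^p (r.B a) ≃ Nat(r, q^p)`,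
the middle step being a definitional equality. Naturality in `r` is then naturality of the
transformation `r × p ⟶ q` along `Sum.map id`. -/

namespace PFunctor

variable (P Q : PFunctor.{u, u}) (G : Type u ⥤ Type u)

def natTransEquiv : (P.toFunctor ⟶ G) ≃ ∀ a : P.A, G.obj (P.B a) where
  toFun β a := β.app (P.B a) ⟨a, id⟩
  invFun s :=
    { app _ := ↾fun x => G.map (↾x.2) (s x.1)
      naturality _ _ f :=
        ConcreteCategory.hom_ext _ _ fun ⟨a, g⟩ => G.map_comp_apply (↾g) f (s a) }
  left_inv β := NatTrans.ext <| funext fun _ => ConcreteCategory.hom_ext _ _ fun ⟨a, g⟩ =>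
    (NatTrans.naturality_apply β (↾g) (⟨a, id⟩ : P.Obj (P.B a))).symm
  right_inv s := funext fun a => G.map_id_apply _ (s a)

def prodNatTransEquiv :
    (prodFun P.toFunctor Q.toFunctor ⟶ G) ≃
      ∀ (a : P.A) (i : Q.A), G.obj (Q.B i ⊕ P.B a) where
  toFun α a i := α.app (Q.B i ⊕ P.B a) (⟨a, Sum.inr⟩, ⟨i, Sum.inl⟩)
  invFun s :=
    { app _ := ↾fun x => G.map (↾(Sum.elim x.2.2 x.1.2)) (s x.1.1 x.2.1)
      naturality _ _ f := ConcreteCategory.hom_ext _ _ fun ⟨⟨a, g⟩, ⟨i, y⟩⟩ =>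
        calc G.map (↾(Sum.elim (f ∘ y) (f ∘ g))) (s a i)
            = G.map (↾(Sum.elim y g) ≫ f) (s a i) := by rw [← Sum.comp_elim]; rfl
          _ = G.map f (G.map (↾(Sum.elim y g)) (s a i)) := G.map_comp_apply _ _ _ }
  left_inv α := NatTrans.ext <| funext fun _ => ConcreteCategory.hom_ext _ _
    fun ⟨⟨a, g⟩, ⟨i, y⟩⟩ => (NatTrans.naturality_apply α (↾(Sum.elim y g))
      ((⟨a, Sum.inr⟩, ⟨i, Sum.inl⟩) :
        (prodFun P.toFunctor Q.toFunctor).obj (Q.B i ⊕ P.B a))).symm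
  right_inv s := funext fun a => funext fun i => by
    change G.map (↾(Sum.elim Sum.inl Sum.inr)) (s a i) = s a i
    rw [Sum.elim_inl_inr]
    exact G.map_id_apply _ (s a i)

end PFunctor

def curryEquiv (p q r : PFunctor.{u, u}) :
    (prodFun r.toFunctor p.toFunctor ⟶ q.toFunctor) ≃ (r.toFunctor ⟶ expFun p q) :=
  (r.prodNatTransEquiv p q.toFunctor).trans (r.natTransEquiv (expFun p q)).symm

theorem curryEquiv_lensProdWhisker (p q : PFunctor.{u, u}) {r r' : PFunctor.{u, u}}
    (f : ∀ i : r'.A, Σ j : r.A, (r.B j → r'.B i))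
    (α : prodFun r.toFunctor p.toFunctor ⟶ q.toFunctor) :
    curryEquiv p q r' (lensProdWhisker p f ≫ α) = lensNat f ≫ curryEquiv p q r α := by
  refine (Equiv.symm_apply_eq (r'.natTransEquiv (expFun p q))).mpr
    (funext fun a => funext fun i => ?_)
  exact NatTrans.naturality_apply α (↾(Sum.map id (f a).2))
    ((⟨(f a).1, Sum.inr⟩, ⟨i, Sum.inl⟩) :
      (prodFun r.toFunctor p.toFunctor).obj (p.B i ⊕ r.B (f a).1))

/-- `Poly` is cartesian closed: `Nat(r × p, q) ≅ Nat(r, q^p)`, naturally in `r`. -/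
theorem stmt_4 (p q : PFunctor.{u, u}) :
    ∃ e : ∀ r : PFunctor.{u, u},
        (prodFun r.toFunctor p.toFunctor ⟶ q.toFunctor) ≃ (r.toFunctor ⟶ expFun p q),
      ∀ (r r' : PFunctor.{u, u}) (f : ∀ i : r'.A, Σ j : r.A, (r.B j → r'.B i))
        (α : prodFun r.toFunctor p.toFunctor ⟶ q.toFunctor),
        e r' (lensProdWhisker p f ≫ α) = lensNat f ≫ e r α :=
  ⟨curryEquiv p q, fun _ _ f α => curryEquiv_lensProdWhisker p q f α⟩
end

section
/- The composition product is duoidal over the Dirichlet product: for polynomial functors p₁, p₂, q₁, q₂ there is a natural transformation from the associated functor of (p₁ ∘ p₂) ⊗ (q₁ ∘ q₂) to the associated functor of (p₁ ⊗ q₁) ∘ (p₂ ⊗ q₂). -/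
open CategoryTheory

universe u

/-- The Dirichlet product of polynomial functors: positions multiply, directions multiply. -/
def tensorPoly (p q : PFunctor.{u, u}) : PFunctor.{u, u} :=
  ⟨p.A × q.A, fun ij => p.B ij.1 × q.B ij.2⟩

/-- The composition product of polynomial functors. -/
def compPoly (p q : PFunctor.{u, u}) : PFunctor.{u, u} :=
  ⟨Σ i : p.A, (p.B i → q.A), fun x => Σ d : p.B x.1, q.B (x.2 d)⟩

namespace PFunctor

structure Lens (P Q : PFunctor.{u, u}) where
  onPos : P.A → Q.A
  onDir : ∀ a, Q.B (onPos a) → P.B a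

/-- Naturality is definitional: the functor postcomposes on directions, the lens precomposes. -/
def Lens.toNatTrans {P Q : PFunctor.{u, u}} (φ : Lens P Q) : P.toFunctor ⟶ Q.toFunctor where
  app _ := TypeCat.ofHom fun x => ⟨φ.onPos x.1, x.2 ∘ φ.onDir x.1⟩
  naturality _ _ _ := rfl

def duoidalInterchange (p₁ p₂ q₁ q₂ : PFunctor.{u, u}) :
    Lens (tensorPoly (compPoly p₁ p₂) (compPoly q₁ q₂))
      (compPoly (tensorPoly p₁ q₁) (tensorPoly p₂ q₂)) where
  onPos x := ⟨(x.1.1, x.2.1), fun d => (x.1.2 d.1, x.2.2 d.2)⟩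
  onDir _ d := (⟨d.1.1, d.2.1⟩, ⟨d.1.2, d.2.2⟩)

end PFunctor

/-- the composition product is duoidal over the Dirichlet product: there is a
natural transformation `(p₁ ∘ p₂) ⊗ (q₁ ∘ q₂) ⟶ (p₁ ⊗ q₁) ∘ (p₂ ⊗ q₂)`. -/
theorem stmt_6 (p₁ p₂ q₁ q₂ : PFunctor.{u, u}) :
    Nonempty ((tensorPoly (compPoly p₁ p₂) (compPoly q₁ q₂)).toFunctor ⟶
      (compPoly (tensorPoly p₁ q₁) (tensorPoly p₂ q₂)).toFunctor) :=
  ⟨(PFunctor.duoidalInterchange p₁ p₂ q₁ q₂).toNatTrans⟩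
end
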